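/- Counting bound for resonant frequency boxes: fix k with |k| ≥ 2^β and σ ∈ ℝ, and let E be a union of N intervals each of length ≤ L. Then the set of integers k′ such that k′² − kk′ ∈ (1/3)(−σ/k − k² + 2^{−β}E) is contained in at most 2N intervals, each of length O((L·2^{−β})^{1/2}). -/

import Mathlib

open scoped Real BigOperators Classical
open Complex MeasureTheory

noncomputable section

/-- Japanese bracket `⟨x⟩ = (1+x²)^{1/2}`. -/
def jb (x : ℝ) : ℝ := Real.sqrt (1 + x ^ 2)

/-- `d_τ(σ) = (e^{iτσ} − 1)/τ`. -/
def dTau (τ σ : ℝ) : ℂ := (Complex.exp (Complex.I * (τ : ℂ) * (σ : ℂ)) - 1) / (τ : ℂ)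

/-- Discrete space-time Fourier transform of a sequence `n ↦ (k ↦ û^n(k))` of
Fourier-coefficient functions: `ũ(σ,k) = τ ∑_m û^m(k) e^{imτσ}`. -/
def dFT (τ : ℝ) (u : ℤ → ℤ → ℂ) (σ : ℝ) (k : ℤ) : ℂ :=
  (τ : ℂ) * ∑' m : ℤ, u m k * Complex.exp (Complex.I * (m : ℂ) * (τ : ℂ) * (σ : ℂ))

/-- Discrete Bourgain norm `‖u‖_{X^{s,b}_τ} = ‖⟨k⟩^s ⟨d_τ(σ+k³)⟩^b ũ(σ,k)‖_{L²(σ) ℓ²(k)}`,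
with `σ ∈ [−π/τ, π/τ]`. -/
def XNorm (τ s b : ℝ) (u : ℤ → ℤ → ℂ) : ℝ :=
  (∫ σ in Set.Ioc (-(π / τ)) (π / τ),
      ∑' k : ℤ, jb (k : ℝ) ^ (2 * s) * jb ‖dTau τ (σ + (k : ℝ) ^ 3)‖ ^ (2 * b) *
        ‖dFT τ u σ k‖ ^ 2) ^ ((1 : ℝ) / 2)

/-- Sobolev norm on Fourier coefficients: `‖f‖_{H^s}² = ∑_k ⟨k⟩^{2s} |f̂(k)|²`. -/
def HsNorm (s : ℝ) (f : ℤ → ℂ) : ℝ :=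
  (∑' k : ℤ, jb (k : ℝ) ^ (2 * s) * ‖f k‖ ^ 2) ^ ((1 : ℝ) / 2)

/-- Frequency truncation `Π_τ` to `|k| ≤ τ^{-1/3}`, acting on Fourier coefficients. -/
def PiCoef (τ : ℝ) (f : ℤ → ℂ) : ℤ → ℂ :=
  fun k => if |(k : ℝ)| ≤ τ ^ (-(1 : ℝ) / 3) then f k else 0

/-- `Π_τ` acting on a sequence of Fourier-coefficient functions. -/
def PiT (τ : ℝ) (u : ℤ → ℤ → ℂ) : ℤ → ℤ → ℂ := fun n => PiCoef τ (u n)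

/-- Fourier inversion formula for the discrete space-time Fourier transform; it encodes
that `(u^n)_n` genuinely belongs to the relevant discrete Bourgain class. -/
def InvOK (τ : ℝ) (u : ℤ → ℤ → ℂ) : Prop :=
  ∀ m k : ℤ, u m k = ((1 / (2 * π) : ℝ) : ℂ) *
    ∫ σ in Set.Ioc (-(π / τ)) (π / τ),
      dFT τ u σ k * Complex.exp (-(Complex.I * (m : ℂ) * (τ : ℂ) * (σ : ℂ)))

/-- `ℓ²(k) L¹(σ)` norm with weight `⟨k⟩^s`. -/
def L2L1 (τ s : ℝ) (u : ℤ → ℤ → ℂ) : ℝ :=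
  (∑' k : ℤ, (∫ σ in Set.Ioc (-(π / τ)) (π / τ), jb (k : ℝ) ^ s * ‖dFT τ u σ k‖) ^ 2) ^
    ((1 : ℝ) / 2)

/-- `‖u‖_{X^s_τ} = ‖u‖_{X^{s,1/2}_τ} + ‖⟨k⟩^s ũ‖_{ℓ²(k)L¹(σ)}`. -/
def XsNorm (τ s : ℝ) (u : ℤ → ℤ → ℂ) : ℝ := XNorm τ s (1 / 2) u + L2L1 τ s u

/-- `‖F‖_{Y^s_τ} = ‖F‖_{X^{s,−1/2}_τ} + ‖⟨k⟩^s ⟨d_τ(σ+k³)⟩^{−1} F̃‖_{ℓ²(k)L¹(σ)}`. -/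
def YNorm (τ s : ℝ) (u : ℤ → ℤ → ℂ) : ℝ :=
  XNorm τ s (-(1 / 2)) u +
    (∑' k : ℤ, (∫ σ in Set.Ioc (-(π / τ)) (π / τ),
        jb (k : ℝ) ^ s * ‖dFT τ u σ k‖ / jb ‖dTau τ (σ + (k : ℝ) ^ 3)‖) ^ 2) ^ ((1 : ℝ) / 2)

/-- The function on the torus with Fourier coefficients `c`. -/
def phys (c : ℤ → ℂ) (x : ℝ) : ℂ := ∑' k : ℤ, c k * Complex.exp (Complex.I * (k : ℂ) * (x : ℂ))

/-! Completing the square, `k′² − kk′ = (k′ − k/2)² − k²/4`, turns the condition into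
`(k′ − k/2)² ∈ [mᵢ, Mᵢ]` for one of `N` intervals with `Mᵢ − mᵢ ≤ L·2^{−β}`. Then `|k′ − k/2|`
lies in `[√mᵢ, √Mᵢ]`, an interval of length at most `√(Mᵢ − mᵢ)` by subadditivity of `√`, so
`k′` lies in one of its two reflections about `k/2`. -/

theorem Real.sqrt_sub_sqrt_le_sqrt_sub (x y : ℝ) : √y - √x ≤ √(y - x) := by
  rcases lt_or_ge x 0 with hx | hx
  · rw [Real.sqrt_eq_zero_of_nonpos hx.le, sub_zero]
    exact Real.sqrt_le_sqrt (by linarith)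
  rcases le_total y x with hyx | hxy
  · linarith [Real.sqrt_le_sqrt hyx, Real.sqrt_nonneg (y - x)]
  rw [sub_le_iff_le_add, Real.sqrt_le_left (by positivity)]
  nlinarith [Real.sq_sqrt (sub_nonneg.2 hxy), Real.sq_sqrt hx,
    mul_nonneg (Real.sqrt_nonneg (y - x)) (Real.sqrt_nonneg x)]

theorem Real.mem_Icc_sqrt_or_neg_of_sq_mem_Icc {t m M : ℝ} (h : t ^ 2 ∈ Set.Icc m M) :
    t ∈ Set.Icc (√m) (√M) ∨ t ∈ Set.Icc (-√M) (-√m) := by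
  have hlow : √m ≤ |t| := Real.sqrt_sq_eq_abs t ▸ Real.sqrt_le_sqrt h.1
  have hupp : |t| ≤ √M := Real.abs_le_sqrt h.2
  rcases le_total 0 t with ht | ht
  · rw [abs_of_nonneg ht] at hlow hupp
    exact Or.inl ⟨hlow, hupp⟩
  · rw [abs_of_nonpos ht] at hlow hupp
    exact Or.inr ⟨by linarith, by linarith⟩

theorem exists_Icc_cover_of_sq_sub_mem_iUnion {N : ℕ} (a b : Fin N → ℝ) {ℓ : ℝ}
    (hab : ∀ i, b i - a i ≤ ℓ) (x₀ : ℝ) :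
    ∃ c d : Fin (2 * N) → ℝ, (∀ j, d j - c j ≤ √ℓ) ∧
      ∀ x : ℝ, (x - x₀) ^ 2 ∈ ⋃ i, Set.Icc (a i) (b i) → ∃ j, x ∈ Set.Icc (c j) (d j) := by
  let c := Fin.append (fun i => x₀ + √(a i)) (fun i => x₀ - √(b i)) ∘ Fin.cast (two_mul N)
  let d := Fin.append (fun i => x₀ + √(b i)) (fun i => x₀ - √(a i)) ∘ Fin.cast (two_mul N)
  have hroot (i : Fin N) : √(b i) - √(a i) ≤ √ℓ :=
    (Real.sqrt_sub_sqrt_le_sqrt_sub _ _).trans (Real.sqrt_le_sqrt (hab i))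
  refine ⟨c, d, fun j => ?_, fun x hx => ?_⟩
  · obtain ⟨j, rfl⟩ := (finCongr (two_mul N)).symm.surjective j
    induction j using Fin.addCases with
    | left i =>
      simp only [c, d, Function.comp_apply, finCongr_symm_apply, Fin.cast_cast, Fin.cast_eq_self,
        Fin.append_left]
      linarith [hroot i]
    | right i =>
      simp only [c, d, Function.comp_apply, finCongr_symm_apply, Fin.cast_cast, Fin.cast_eq_self,
        Fin.append_right]
      linarith [hroot i]
  · obtain ⟨i, hi⟩ := Set.mem_iUnion.1 hx
    rcases Real.mem_Icc_sqrt_or_neg_of_sq_mem_Icc hi with ⟨h₁, h₂⟩ | ⟨h₁, h₂⟩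
    · refine ⟨Fin.cast (two_mul N).symm (Fin.castAdd N i), ?_⟩
      simp only [c, d, Set.mem_Icc, Function.comp_apply, Fin.cast_cast, Fin.cast_eq_self,
        Fin.append_left]
      constructor <;> linarith
    · refine ⟨Fin.cast (two_mul N).symm (Fin.natAdd N i), ?_⟩
      simp only [c, d, Set.mem_Icc, Function.comp_apply, Fin.cast_cast, Fin.cast_eq_self,
        Fin.append_right]
      constructor <;> linarith

/-- counting bound for resonant frequency boxes: if `|k| ≥ 2^β` and `E` is a
union of `N` intervals each of length `≤ L`, then the set of integers `k′` with
`k′² − kk′ ∈ (1/3)(−σ/k − k² + 2^{−β}E)` is contained in at most `2N` intervals, each of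
length `O((L·2^{−β})^{1/2})`. -/
theorem resonant_box_counting :
    ∃ C : ℝ, 0 < C ∧
      ∀ (β : ℝ) (k : ℤ) (σ L : ℝ) (N : ℕ) (a b : Fin N → ℝ),
        0 ≤ L → (2 : ℝ) ^ β ≤ |(k : ℝ)| → (∀ i, b i - a i ≤ L) →
          ∃ c d : Fin (2 * N) → ℝ,
            (∀ j, d j - c j ≤ C * (L * (2 : ℝ) ^ (-β)) ^ ((1 : ℝ) / 2)) ∧
              ∀ k' : ℤ,
                ((k' : ℝ) ^ 2 - (k : ℝ) * (k' : ℝ)) ∈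
                    (fun y => (1 / 3) * (-σ / (k : ℝ) - (k : ℝ) ^ 2 + (2 : ℝ) ^ (-β) * y)) ''
                      (⋃ i, Set.Icc (a i) (b i)) →
                  ∃ j, (k' : ℝ) ∈ Set.Icc (c j) (d j) := by
  refine ⟨1, one_pos, fun β k σ L N a b hL _ hab => ?_⟩
  set p : ℝ := (2 : ℝ) ^ (-β)
  have hp : 0 < p := Real.rpow_pos_of_pos two_pos _
  set g : ℝ → ℝ := fun y => (1 / 3) * (-σ / (k : ℝ) - (k : ℝ) ^ 2 + p * y) + (k : ℝ) ^ 2 / 4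
  have hg : Monotone g := fun y y' h => by simp only [g]; gcongr
  obtain ⟨c, d, hlen, hcover⟩ := exists_Icc_cover_of_sq_sub_mem_iUnion (g ∘ a) (g ∘ b)
    (ℓ := L * p) (fun i => by simp only [g, Function.comp]; nlinarith [hab i]) ((k : ℝ) / 2)
  refine ⟨c, d, fun j => by rw [one_mul, ← Real.sqrt_eq_rpow]; exact hlen j, fun k' hk' => ?_⟩
  obtain ⟨y, hy, hk'y⟩ := hk'
  obtain ⟨i, hi⟩ := Set.mem_iUnion.1 hy
  refine hcover k' (Set.mem_iUnion.2 ⟨i, ?_⟩)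
  have hsq : ((k' : ℝ) - k / 2) ^ 2 = g y := by
    beta_reduce at hk'y
    simp only [g]
    linear_combination -hk'y
  exact hsq ▸ ⟨hg hi.1, hg hi.2⟩
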